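/- Let d ≥ 2 and let a_1, …, a_d be positive integers with gcd(a_i, a_j) = 1 for all i ≠ j. Let T(x) denote the number of tuples (x_1, …, x_d) ∈ ℕ^d with x_1·a_1 + … + x_d·a_d = x, and set P = a_1·a_2·⋯·a_d. Then T(x)/x^{d-1} tends to 1/((d−1)!·P) as x → ∞ over the natural numbers. -/

import Mathlib

open Filter Finset Topology

/-!
Let `L z` be the number of solutions of `∑ f i * a i ≤ z`. Coordinatewise division with remainder
`g ↦ (g / a, g % a)` tiles `ℕ^d` by boxes `∏ [0, a i)`, so `P * L z` lies between the numbers of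
lattice points in the simplices `∑ g i ≤ z` and `∑ g i ≤ z + ∑ a i`, i.e. between `(z + d).choose d`
and `(z + ∑ a i + d).choose d`. As `a 0` and `a 1` are coprime, every `m ≥ a 0 * a 1` is a
nonnegative combination of them, hence `T x ≤ T y` whenever `x + a 0 * a 1 ≤ y`. Comparing `T` with
its averages over windows of a fixed length `h` then pins `h * T x` between differences of these
binomials, which are `h * x ^ (d - 1) / (d - 1)!` up to `O(∑ a i * x ^ (d - 1))`. Letting `x → ∞`
and then `h → ∞` gives the limit.
-/

theorem Finset.Nat.card_antidiagonalTuple (d n : ℕ) :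
    #(Finset.Nat.antidiagonalTuple d n) = d.multichoose n := by
  rw [← Sym.card_sym_fin_eq_multichoose, ← Fintype.card_coe]
  exact Fintype.card_congr <| (Equiv.subtypeEquivRight fun _ => mem_antidiagonalTuple).trans
    (Sym.equivNatSumOfFintype _ _).symm

def simplexPoints (d n : ℕ) : Finset (Fin d → ℕ) :=
  (range (n + 1)).biUnion (Finset.Nat.antidiagonalTuple d)

theorem mem_simplexPoints {d n : ℕ} {g : Fin d → ℕ} : g ∈ simplexPoints d n ↔ ∑ i, g i ≤ n := by
  simp [simplexPoints, Finset.Nat.mem_antidiagonalTuple]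

theorem card_simplexPoints (d n : ℕ) : #(simplexPoints d n) = (n + d).choose d := by
  rw [simplexPoints, card_biUnion, ← Nat.sum_range_multichoose]
  · simp only [Finset.Nat.card_antidiagonalTuple]
  · intro x _ y _ hxy
    exact disjoint_left.2 fun g hx hy => hxy <| by
      rw [Finset.Nat.mem_antidiagonalTuple] at hx hy; rw [← hx, ← hy]

section Weighted

variable {d : ℕ} {a : Fin d → ℕ}

def solutionsLE (a : Fin d → ℕ) (x : ℕ) : Finset (Fin d → ℕ) :=
  (simplexPoints d x).filter fun f => ∑ i, f i * a i ≤ x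

def solutions (a : Fin d → ℕ) (x : ℕ) : Finset (Fin d → ℕ) :=
  (simplexPoints d x).filter fun f => ∑ i, f i * a i = x

theorem sum_le_sum_mul (ha : ∀ i, 0 < a i) (f : Fin d → ℕ) : ∑ i, f i ≤ ∑ i, f i * a i :=
  sum_le_sum fun i _ => Nat.le_mul_of_pos_right _ (ha i)

theorem mem_solutionsLE (ha : ∀ i, 0 < a i) {x : ℕ} {f : Fin d → ℕ} :
    f ∈ solutionsLE a x ↔ ∑ i, f i * a i ≤ x := by
  rw [solutionsLE, mem_filter, mem_simplexPoints, and_iff_right_iff_imp]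
  exact (sum_le_sum_mul ha f).trans

theorem mem_solutions (ha : ∀ i, 0 < a i) {x : ℕ} {f : Fin d → ℕ} :
    f ∈ solutions a x ↔ ∑ i, f i * a i = x := by
  rw [solutions, mem_filter, mem_simplexPoints, and_iff_right_iff_imp]
  exact fun h => (sum_le_sum_mul ha f).trans h.le

theorem card_solutionsLE_eq_sum (ha : ∀ i, 0 < a i) (x : ℕ) :
    #(solutionsLE a x) = ∑ y ∈ range (x + 1), #(solutions a y) := by
  rw [card_eq_sum_card_fiberwise fun f hf => mem_range_succ_iff.2 ((mem_solutionsLE ha).1 hf)]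
  refine sum_congr rfl fun y hy => congrArg card <| ext fun f => ?_
  simp only [mem_filter, mem_solutionsLE ha, mem_solutions ha]
  have := mem_range_succ_iff.1 hy
  omega

def divMod (a : Fin d → ℕ) (g : Fin d → ℕ) : (Fin d → ℕ) × (Fin d → ℕ) :=
  (fun i => g i / a i, fun i => g i % a i)

def cellMap (a : Fin d → ℕ) (p : (Fin d → ℕ) × (Fin d → ℕ)) : Fin d → ℕ :=
  fun i => p.1 i * a i + p.2 i

def residues (a : Fin d → ℕ) : Finset (Fin d → ℕ) :=
  Fintype.piFinset fun i => range (a i)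

theorem card_solutionsLE_product_residues (x : ℕ) :
    #(solutionsLE a x ×ˢ residues a) = (∏ i, a i) * #(solutionsLE a x) := by
  simp [residues, Fintype.card_piFinset, mul_comm]

theorem cellMap_divMod (g : Fin d → ℕ) : cellMap a (divMod a g) = g :=
  funext fun i => Nat.div_add_mod' (g i) (a i)

theorem divMod_cellMap (ha : ∀ i, 0 < a i) {p : (Fin d → ℕ) × (Fin d → ℕ)}
    (hp : p.2 ∈ residues a) :
    divMod a (cellMap a p) = p := by
  simp only [residues, Fintype.mem_piFinset, mem_range] at hp
  have h i : cellMap a p i / a i = p.1 i ∧ cellMap a p i % a i = p.2 i :=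
    (Nat.div_mod_unique (ha i)).2 ⟨by rw [cellMap]; ring, hp i⟩
  exact Prod.ext (funext fun i => (h i).1) (funext fun i => (h i).2)

theorem card_simplexPoints_le_prod_mul_card_solutionsLE (ha : ∀ i, 0 < a i) (x : ℕ) :
    #(simplexPoints d x) ≤ (∏ i, a i) * #(solutionsLE a x) := by
  rw [← card_solutionsLE_product_residues]
  refine card_le_card_of_surjOn (cellMap a) <| Set.LeftInvOn.surjOn (fun g _ => cellMap_divMod g)
    fun g hg => ?_
  simp only [coe_product, Set.mem_prod, mem_coe, mem_simplexPoints, mem_solutionsLE ha,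
    residues, Fintype.mem_piFinset, mem_range, divMod] at hg ⊢
  exact ⟨(sum_le_sum fun i _ => Nat.div_mul_le_self _ _).trans hg, fun i => Nat.mod_lt _ (ha i)⟩

theorem prod_mul_card_solutionsLE_le (ha : ∀ i, 0 < a i) (x : ℕ) :
    (∏ i, a i) * #(solutionsLE a x) ≤ #(simplexPoints d (x + ∑ i, a i)) := by
  rw [← card_solutionsLE_product_residues]
  refine card_le_card_of_injOn (cellMap a) (fun p hp => ?_)
    (Set.LeftInvOn.injOn fun p hp => divMod_cellMap ha (mem_product.1 hp).2)
  simp only [coe_product, Set.mem_prod, mem_coe, mem_simplexPoints, mem_solutionsLE ha,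
    residues, Fintype.mem_piFinset, mem_range, cellMap] at hp ⊢
  rw [sum_add_distrib]
  exact add_le_add hp.1 (sum_le_sum fun i _ => (hp.2 i).le)

theorem card_solutions_le_card_solutions_add (ha : ∀ i, 0 < a i) {c : Fin d → ℕ} (x : ℕ) :
    #(solutions a x) ≤ #(solutions a (x + ∑ i, c i * a i)) := by
  refine card_le_card_of_injOn (· + c) (fun f hf => ?_) (add_left_injective c).injOn
  simp only [mem_coe, mem_solutions ha, Pi.add_apply, add_mul, sum_add_distrib] at hf ⊢
  rw [hf]

theorem exists_sum_mul_eq_of_coprime {i j : Fin d} (hcop : (a i).Coprime (a j))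
    {m : ℕ} (hm : a i * a j ≤ m) : ∃ c : Fin d → ℕ, ∑ l, c l * a l = m := by
  obtain ⟨u, v, huv⟩ := Nat.exists_add_mul_eq_of_gcd_dvd_of_mul_pred_le (a i) (a j) m
    (by simp [hcop.gcd_eq_one]) ((Nat.mul_le_mul (Nat.pred_le _) (Nat.pred_le _)).trans hm)
  refine ⟨Pi.single i u + Pi.single j v, ?_⟩
  simp [add_mul, sum_add_distrib, Pi.single_apply, huv]

theorem card_solutions_le_of_add_le (ha : ∀ i, 0 < a i) {i j : Fin d}
    (hcop : (a i).Coprime (a j)) {x y : ℕ} (hxy : x + a i * a j ≤ y) :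
    #(solutions a x) ≤ #(solutions a y) := by
  obtain ⟨c, hc⟩ := exists_sum_mul_eq_of_coprime hcop (show a i * a j ≤ y - x by omega)
  simpa [hc, Nat.add_sub_cancel' (show x ≤ y by omega)] using
    card_solutions_le_card_solutions_add ha (c := c) x

end Weighted

open Nat in
theorem Nat.choose_succ_add_sum_Ico_choose (k : ℕ) {c b : ℕ} (h : c ≤ b) :
    c.choose (k + 1) + ∑ m ∈ Ico c b, m.choose k = b.choose (k + 1) := by
  induction b, h using Nat.le_induction with
  | base => simp
  | succ b hb ih => rw [sum_Ico_succ_top hb, ← add_assoc, ih, choose_succ_succ' b k, add_comm]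

open Nat in
theorem Nat.factorial_mul_sum_Ico_choose_le (k c b : ℕ) :
    k ! * ∑ m ∈ Ico c b, m.choose k ≤ (b - c) * b ^ k := by
  rw [mul_sum, ← Nat.card_Ico c b, ← smul_eq_mul, ← sum_const]
  refine sum_le_sum fun m hm => ?_
  rw [← descFactorial_eq_factorial_mul_choose]
  exact (descFactorial_le_pow m k).trans (Nat.pow_le_pow_left (mem_Ico.1 hm).2.le k)

open Nat in
theorem Nat.pow_mul_le_factorial_mul_sum_Ico_choose (k c b : ℕ) :
    (b - c) * (c + 1 - k) ^ k ≤ k ! * ∑ m ∈ Ico c b, m.choose k := by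
  rw [mul_sum, ← Nat.card_Ico c b, ← smul_eq_mul, ← sum_const]
  refine sum_le_sum fun m hm => ?_
  rw [← descFactorial_eq_factorial_mul_choose]
  exact (Nat.pow_le_pow_left (by have := (mem_Ico.1 hm).1; omega) k).trans
    (pow_sub_le_descFactorial m k)

theorem tendsto_of_forall_eventually_le_of_tendsto {ι α β : Type*} [TopologicalSpace β]
    [LinearOrder β] [OrderTopology β] {l : Filter ι} [l.NeBot] {la : Filter α} {u : α → β}
    {lo hi : ι → α → β} {ℓ r : ι → β} {L : β}
    (hlo : ∀ᶠ i in l, ∀ᶠ x in la, lo i x ≤ u x) (hhi : ∀ᶠ i in l, ∀ᶠ x in la, u x ≤ hi i x)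
    (hlo_lim : ∀ i, Tendsto (lo i) la (𝓝 (ℓ i))) (hhi_lim : ∀ i, Tendsto (hi i) la (𝓝 (r i)))
    (hℓ : Tendsto ℓ l (𝓝 L)) (hr : Tendsto r l (𝓝 L)) : Tendsto u la (𝓝 L) := by
  rw [tendsto_order]
  constructor
  · intro c hc
    obtain ⟨i, hi, hci⟩ := (hlo.and (hℓ.eventually (lt_mem_nhds hc))).exists
    filter_upwards [hi, (hlo_lim i).eventually (lt_mem_nhds hci)] with x h₁ h₂
    exact h₂.trans_le h₁
  · intro c hc
    obtain ⟨i, hi, hci⟩ := (hhi.and (hr.eventually (gt_mem_nhds hc))).exists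
    filter_upwards [hi, (hhi_lim i).eventually (gt_mem_nhds hci)] with x h₁ h₂
    exact h₁.trans_lt h₂

theorem tendsto_mul_one_add_div_pow (a c : ℝ) (k : ℕ) :
    Tendsto (fun x : ℕ => a * (1 + c / x) ^ k) atTop (𝓝 a) := by
  simpa using (((tendsto_const_div_atTop_nhds_zero_nat c).const_add 1).pow k).const_mul a

theorem tendsto_div_pow_of_window_bounds {u : ℕ → ℝ} {Q A : ℝ} (hQ : 0 < Q) (k : ℕ)
    (hlo : ∀ h : ℕ, ∃ C : ℕ, ∀ x : ℕ, C ≤ x →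
      h * ((x : ℝ) - C) ^ k ≤ Q * h * u x + A * ((x : ℝ) - C) ^ k)
    (hhi : ∀ h : ℕ, ∃ C : ℕ, ∀ x : ℕ, Q * h * u x ≤ (h + A) * ((x : ℝ) + C) ^ k) :
    Tendsto (fun x => u x / (x : ℝ) ^ k) atTop (𝓝 Q⁻¹) := by
  choose C hC using hlo
  choose D hD using hhi
  refine tendsto_of_forall_eventually_le_of_tendsto (l := atTop)
    (lo := fun (h x : ℕ) => Q⁻¹ * (1 + -A / h) * (1 + -(C h : ℝ) / x) ^ k)
    (hi := fun (h x : ℕ) => Q⁻¹ * (1 + A / h) * (1 + (D h : ℝ) / x) ^ k)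
    ?_ ?_ (fun h => tendsto_mul_one_add_div_pow _ _ k) (fun h => tendsto_mul_one_add_div_pow _ _ k)
    (by simpa using tendsto_mul_one_add_div_pow Q⁻¹ (-A) 1)
    (by simpa using tendsto_mul_one_add_div_pow Q⁻¹ A 1)
  · filter_upwards [eventually_gt_atTop 0] with h hh
    filter_upwards [eventually_ge_atTop (C h), eventually_gt_atTop 0] with x hx hx0
    have hh' : (0 : ℝ) < h := by exact_mod_cast hh
    have hx' : (0 : ℝ) < x := by exact_mod_cast hx0
    have hpow : (1 + -(C h : ℝ) / x) ^ k * x ^ k = (x - C h) ^ k := by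
      rw [← mul_pow]; field_simp; ring
    rw [le_div_iff₀ (by positivity), mul_assoc, hpow]
    calc Q⁻¹ * (1 + -A / h) * (x - C h) ^ k = (h - A) * ((x : ℝ) - C h) ^ k / (Q * h) := by
          field_simp; ring
      _ ≤ u x := by rw [div_le_iff₀ (by positivity)]; linarith [hC h x hx]
  · filter_upwards [eventually_gt_atTop 0] with h hh
    filter_upwards [eventually_gt_atTop 0] with x hx0
    have hh' : (0 : ℝ) < h := by exact_mod_cast hh
    have hx' : (0 : ℝ) < x := by exact_mod_cast hx0
    have hpow : (1 + (D h : ℝ) / x) ^ k * x ^ k = (x + D h) ^ k := by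
      rw [← mul_pow]; field_simp
    rw [div_le_iff₀ (by positivity), mul_assoc, hpow]
    calc u x ≤ (h + A) * ((x : ℝ) + D h) ^ k / (Q * h) := by
          rw [le_div_iff₀ (by positivity)]; linarith [hD h x]
      _ = Q⁻¹ * (1 + A / h) * (x + D h) ^ k := by field_simp

def MonotoneUpTo (F : ℕ) (T : ℕ → ℕ) : Prop :=
  ∀ x y, x + F ≤ y → T x ≤ T y

section MonotoneUpTo

variable {T : ℕ → ℕ} {F : ℕ}

theorem mul_le_sum_Ico_of_monotoneUpTo (hT : MonotoneUpTo F T) (x h : ℕ) :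
    h * T x ≤ ∑ y ∈ Ico (x + F + 1) (x + F + h + 1), T y := by
  have := card_nsmul_le_sum (Ico (x + F + 1) (x + F + h + 1)) T (T x)
    fun y hy => hT x y (by have := (mem_Ico.1 hy).1; omega)
  simpa using this

theorem sum_Ico_le_mul_of_monotoneUpTo (hT : MonotoneUpTo F T) (z h : ℕ) :
    ∑ y ∈ Ico (z + 1) (z + h + 1), T y ≤ h * T (z + h + F) := by
  have := sum_le_card_nsmul (Ico (z + 1) (z + h + 1)) T (T (z + h + F))
    fun y hy => hT y _ (by have := (mem_Ico.1 hy).2; omega)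
  simpa using this

variable {k A Q : ℕ}

theorem factorial_mul_mul_le_of_monotoneUpTo (hT : MonotoneUpTo F T)
    (hlow : ∀ z, (z + (k + 1)).choose (k + 1) ≤ Q * ∑ y ∈ range (z + 1), T y)
    (hup : ∀ z, Q * ∑ y ∈ range (z + 1), T y ≤ (z + A + (k + 1)).choose (k + 1)) (h x : ℕ) :
    k.factorial * (Q * (h * T x)) ≤ (h + A) * (x + F + h + A + (k + 1)) ^ k := by
  have hwindow : Q * (h * T x) ≤ ∑ m ∈ Ico (x + F + (k + 1)) (x + F + h + A + (k + 1)),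
      m.choose k := by
    have hsplit := sum_range_add_sum_Ico T (show x + F + 1 ≤ x + F + h + 1 by omega)
    have hsum := Nat.mul_le_mul_left Q (mul_le_sum_Ico_of_monotoneUpTo hT x h)
    have hlow' := hlow (x + F)
    have hup' := hup (x + F + h)
    have htel := Nat.choose_succ_add_sum_Ico_choose k
      (show x + F + (k + 1) ≤ x + F + h + A + (k + 1) by omega)
    rw [← hsplit, mul_add] at hup'
    omega
  calc k.factorial * (Q * (h * T x))
      ≤ k.factorial * ∑ m ∈ Ico (x + F + (k + 1)) (x + F + h + A + (k + 1)), m.choose k := by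
        gcongr
    _ ≤ _ := Nat.factorial_mul_sum_Ico_choose_le k _ _
    _ = (h + A) * (x + F + h + A + (k + 1)) ^ k := by congr 1; omega

theorem mul_pow_le_of_monotoneUpTo (hT : MonotoneUpTo F T)
    (hlow : ∀ z, (z + (k + 1)).choose (k + 1) ≤ Q * ∑ y ∈ range (z + 1), T y)
    (hup : ∀ z, Q * ∑ y ∈ range (z + 1), T y ≤ (z + A + (k + 1)).choose (k + 1)) (h z : ℕ) :
    h * z ^ k ≤ k.factorial * (Q * (h * T (z + h + F))) + A * z ^ k := by
  have hwindow : ∑ m ∈ Ico (z + A + (k + 1)) (z + h + (k + 1)), m.choose k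
      ≤ Q * (h * T (z + h + F)) := by
    rcases le_total h A with hhA | hAh
    · simp [Ico_eq_empty_of_le (show z + h + (k + 1) ≤ z + A + (k + 1) by omega)]
    have hsplit := sum_range_add_sum_Ico T (show z + 1 ≤ z + h + 1 by omega)
    have hsum := Nat.mul_le_mul_left Q (sum_Ico_le_mul_of_monotoneUpTo hT z h)
    have hlow' := hlow (z + h)
    have hup' := hup z
    have htel := Nat.choose_succ_add_sum_Ico_choose k
      (show z + A + (k + 1) ≤ z + h + (k + 1) by omega)
    rw [← hsplit, mul_add] at hlow'
    omega
  have hpow : (h - A) * z ^ k ≤ k.factorial * (Q * (h * T (z + h + F))) :=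
    calc (h - A) * z ^ k
        ≤ (z + h + (k + 1) - (z + A + (k + 1))) * (z + A + (k + 1) + 1 - k) ^ k := by
          exact Nat.mul_le_mul (by omega) (Nat.pow_le_pow_left (by omega) k)
      _ ≤ k.factorial * ∑ m ∈ Ico (z + A + (k + 1)) (z + h + (k + 1)), m.choose k :=
          Nat.pow_mul_le_factorial_mul_sum_Ico_choose k _ _
      _ ≤ k.factorial * (Q * (h * T (z + h + F))) := by gcongr
  calc h * z ^ k ≤ (h - A + A) * z ^ k := by gcongr; omega
    _ ≤ k.factorial * (Q * (h * T (z + h + F))) + A * z ^ k := by rw [add_mul]; gcongr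

theorem tendsto_div_pow_of_monotoneUpTo (hT : MonotoneUpTo F T)
    (hlow : ∀ z, (z + (k + 1)).choose (k + 1) ≤ Q * ∑ y ∈ range (z + 1), T y)
    (hup : ∀ z, Q * ∑ y ∈ range (z + 1), T y ≤ (z + A + (k + 1)).choose (k + 1)) (hQ : 0 < Q) :
    Tendsto (fun x => (T x : ℝ) / (x : ℝ) ^ k) atTop (𝓝 (1 / (k.factorial * Q))) := by
  rw [one_div]
  refine tendsto_div_pow_of_window_bounds (A := A) (by positivity) k
    (fun h => ⟨h + F, fun x hx => ?_⟩) (fun h => ⟨F + h + A + (k + 1), fun x => ?_⟩)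
  · obtain ⟨z, rfl⟩ := Nat.exists_eq_add_of_le' hx
    have hz : (h : ℝ) * z ^ k ≤ k.factorial * (Q * (h * T (z + h + F))) + A * z ^ k := by
      exact_mod_cast mul_pow_le_of_monotoneUpTo hT hlow hup h z
    rw [Nat.cast_add, add_sub_cancel_right, ← add_assoc]
    linarith
  · have hx : (k.factorial : ℝ) * (Q * (h * T x)) ≤ (h + A) * (x + F + h + A + (k + 1)) ^ k := by
      exact_mod_cast factorial_mul_mul_le_of_monotoneUpTo hT hlow hup h x
    push_cast
    convert hx using 1 <;> ring

end MonotoneUpTo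

/-- For `d ≥ 2` pairwise coprime positive integers `a 0, …, a (d-1)` with product `P`,
the denumerant `T` satisfies `T x / x^(d-1) → 1/((d-1)!·P)` as `x → ∞`. -/
theorem denumerant_asymptotic (d : ℕ) (hd : 2 ≤ d) (a : Fin d → ℕ) (ha : ∀ i, 0 < a i)
    (hcop : ∀ i j, i ≠ j → Nat.Coprime (a i) (a j))
    (T : ℕ → ℕ) (hT : ∀ x, T x = {f : Fin d → ℕ | ∑ i, f i * a i = x}.ncard)
    (P : ℕ) (hP : P = ∏ i, a i) :
    Tendsto (fun x : ℕ => (T x : ℝ) / (x : ℝ) ^ (d - 1)) atTop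
      (nhds (1 / (Nat.factorial (d - 1) * P))) := by
  obtain ⟨k, rfl⟩ : ∃ k, d = k + 1 := ⟨d - 1, by omega⟩
  rw [Nat.add_sub_cancel]
  have hTsol x : T x = #(solutions a x) := by
    rw [hT, ← Set.ncard_coe_finset]
    congr 1
    ext f
    simp [mem_solutions ha]
  have hL z : ∑ y ∈ range (z + 1), T y = #(solutionsLE a z) := by
    simp only [hTsol, card_solutionsLE_eq_sum ha]
  have h01 : (0 : Fin (k + 1)) ≠ ⟨1, by omega⟩ := by simp [Fin.ext_iff]
  subst hP
  refine tendsto_div_pow_of_monotoneUpTo (F := a 0 * a ⟨1, by omega⟩) (A := ∑ i, a i)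
    (fun x y hxy => ?_) (fun z => ?_) (fun z => ?_) (prod_pos fun i _ => ha i)
  · simpa only [hTsol] using card_solutions_le_of_add_le ha (hcop _ _ h01) hxy
  · rw [hL, ← card_simplexPoints]
    exact card_simplexPoints_le_prod_mul_card_solutionsLE ha z
  · rw [hL, ← card_simplexPoints]
    exact prod_mul_card_solutionsLE_le ha z
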